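/- Let G be a finitely generated group such that every homomorphism from G to every finite group is trivial. Then for every field k of characteristic 0, every integer r ≥ 1, and every homomorphism ρ: G → GL_r(k) with finitely generated image contained in GL_r(A) for some reduced subring A ⊆ k finitely generated as a ℤ-algebra, the homomorphism ρ is trivial. -/

import Mathlib

/-!
Since `ℤ` is a Jacobson ring, so is the finitely generated `ℤ`-algebra `A`, and its residue
fields at maximal ideals are finite by Zariski's lemma. Reducing `ρ` modulo a maximal ideal
`m` gives a homomorphism of `G` into the finite group `GL_r(A/m)`, which is trivial; so every
entry of `ρ g - 1` lies in every maximal ideal, i.e. in the Jacobson radical, which for a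
reduced Jacobson ring is the nilradical `0`.
-/

open Matrix

theorem isJacobsonRing_of_dimensionLEOne {R : Type*} [CommRing R] [IsDomain R]
    [Ring.DimensionLEOne R] (h : (⊥ : Ideal R).jacobson = ⊥) : IsJacobsonRing R := by
  rw [isJacobsonRing_iff_prime_eq]
  intro P hP
  by_cases hbot : P = ⊥
  · rwa [hbot]
  · have := hP.isMaximal hbot
    exact Ideal.jacobson_eq_self_of_isMaximal

theorem Int.jacobson_bot : (⊥ : Ideal ℤ).jacobson = ⊥ := by
  refine eq_bot_iff.mpr fun x hx => ?_
  -- `x + 1` and `1 - x` are both units, i.e. `±1`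
  have h₁ := Int.isUnit_iff.mp (Ideal.mem_jacobson_bot.mp hx 1)
  have h₂ := Int.isUnit_iff.mp (Ideal.mem_jacobson_bot.mp hx (-1))
  rw [Ideal.mem_bot]
  omega

instance Int.isJacobsonRing : IsJacobsonRing ℤ :=
  isJacobsonRing_of_dimensionLEOne Int.jacobson_bot

theorem finite_of_moduleFinite_int (K : Type*) [Field K] [Module.Finite ℤ K] : Finite K := by
  rcases CharP.char_is_prime_or_zero K (ringChar K) with hp | hp
  · have : Fact (ringChar K).Prime := ⟨hp⟩
    let _ : Algebra (ZMod (ringChar K)) K := ZMod.algebra K (ringChar K)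
    have : IsScalarTower ℤ (ZMod (ringChar K)) K :=
      IsScalarTower.of_algebraMap_eq' (RingHom.ext_int _ _)
    have : Module.Finite (ZMod (ringChar K)) K :=
      Module.Finite.of_restrictScalars_finite ℤ (ZMod (ringChar K)) K
    exact Module.finite_of_finite (ZMod (ringChar K))
  · -- in characteristic zero `ℤ ⊆ K` would be an integral extension of a field
    have : CharZero K := (CharP.ringChar_zero_iff_CharZero K).mp hp
    exact absurd (isField_of_isIntegral_of_isField Int.cast_injective (Field.toIsField K))
      Int.not_isField

theorem finite_quotient_of_finiteType_int {A : Type*} [CommRing A] [Algebra.FiniteType ℤ A]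
    (m : Ideal A) [m.IsMaximal] : Finite (A ⧸ m) := by
  let _ : Field (A ⧸ m) := Ideal.Quotient.field m
  have : Algebra.FiniteType ℤ (A ⧸ m) :=
    .of_surjective (Ideal.Quotient.mkₐ ℤ m) (Ideal.Quotient.mkₐ_surjective ℤ m)
  have : Module.Finite ℤ (A ⧸ m) := finite_of_finite_type_of_isJacobsonRing ℤ (A ⧸ m)
  exact finite_of_moduleFinite_int (A ⧸ m)

theorem eq_zero_of_forall_mem_isMaximal {R : Type*} [CommRing R] [IsJacobsonRing R]
    [IsReduced R] {x : R} (hx : ∀ m : Ideal R, m.IsMaximal → x ∈ m) : x = 0 := by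
  have hjac : x ∈ (⊥ : Ideal R).jacobson := Ideal.mem_sInf.mpr fun m ⟨_, hm⟩ => hx m hm
  obtain ⟨n, hn⟩ := (Ideal.radical_eq_jacobson (⊥ : Ideal R) ▸ hjac : x ∈ (⊥ : Ideal R).radical)
  exact IsNilpotent.eq_zero ⟨n, (Ideal.mem_bot.mp hn)⟩

namespace Matrix.GeneralLinearGroup

variable {n : Type*} [Fintype n] [DecidableEq n]

theorem eq_one_of_forall_map_quotient_eq_one {A : Type*} [CommRing A] [IsJacobsonRing A]
    [IsReduced A] {M : GL n A}
    (hM : ∀ m : Ideal A, m.IsMaximal → map (Ideal.Quotient.mk m) M = 1) : M = 1 := by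
  ext i j
  rw [← sub_eq_zero]
  refine eq_zero_of_forall_mem_isMaximal fun m hm => ?_
  rw [← Ideal.Quotient.eq]
  simpa [Matrix.one_apply, apply_ite (Ideal.Quotient.mk m)] using
    congrArg (fun N : GL n (A ⧸ m) => (N : Matrix n n (A ⧸ m)) i j) (hM m hm)

theorem mem_range_map_subtype {k : Type*} [CommRing k] (A : Subring k) (M : GL n k)
    (hM : ∀ i j, (M : Matrix n n k) i j ∈ A) (hMinv : ∀ i j, (M⁻¹ : Matrix n n k) i j ∈ A) :
    M ∈ (map A.subtype).range := by
  let restrict (N : Matrix n n k) (hN : ∀ i j, N i j ∈ A) : Matrix n n A :=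
    fun i j => ⟨N i j, hN i j⟩
  have hι : Function.Injective (A.subtype.mapMatrix : Matrix n n A →+* Matrix n n k) :=
    Matrix.map_injective Subtype.val_injective
  have hrestrict (N : Matrix n n k) (hN) : A.subtype.mapMatrix (restrict N hN) = N := rfl
  refine ⟨⟨restrict M hM, restrict _ hMinv, hι ?_, hι ?_⟩, Units.ext (hrestrict M hM)⟩
  · rw [map_mul, map_one, hrestrict, hrestrict, ← coe_units_inv, M.mul_inv]
  · rw [map_mul, map_one, hrestrict, hrestrict, ← coe_units_inv, M.inv_mul]

theorem map_injective {R S : Type*} [CommRing R] [CommRing S] {f : R →+* S}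
    (hf : Function.Injective f) : Function.Injective (map (n := n) f) :=
  Units.map_injective (Matrix.map_injective hf)

theorem exists_comp_map_subtype_eq {G : Type*} [Group G] {k : Type*} [CommRing k]
    (A : Subring k) (ρ : G →* GL n k)
    (hA : ∀ g i j, (ρ g : Matrix n n k) i j ∈ A ∧ ((ρ g)⁻¹ : Matrix n n k) i j ∈ A) :
    ∃ ρ' : G →* GL n A, (map A.subtype).comp ρ' = ρ := by
  have hρ g : ρ g ∈ (map A.subtype).range :=
    mem_range_map_subtype A (ρ g) (fun i j => (hA g i j).1) (fun i j => (hA g i j).2)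
  let e := MonoidHom.ofInjective (map_injective (n := n) A.subtype_injective)
  refine ⟨e.symm.toMonoidHom.comp (ρ.codRestrict _ hρ), ?_⟩
  ext1 g
  simp [e, MonoidHom.apply_ofInjective_symm]

end Matrix.GeneralLinearGroup

theorem Matrix.GeneralLinearGroup.apply_eq_one_of_finiteType_int {G : Type*} [Group G]
    (hfin : ∀ (H : Type) [Group H] [Finite H] (f : G →* H) (g : G), f g = 1)
    {n : Type} [Fintype n] [DecidableEq n] {A : Type} [CommRing A] [IsReduced A]
    [Algebra.FiniteType ℤ A] (ρ : G →* GL n A) (g : G) : ρ g = 1 := by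
  have : IsJacobsonRing A := isJacobsonRing_of_finiteType (A := ℤ)
  refine eq_one_of_forall_map_quotient_eq_one fun m hm => ?_
  have : Finite (A ⧸ m) := finite_quotient_of_finiteType_int m
  exact hfin (GL n (A ⧸ m)) ((map (Ideal.Quotient.mk m)).comp ρ) g

theorem stmt_14_general (G : Type) [Group G]
    (hfin : ∀ (H : Type) [Group H] [Finite H] (f : G →* H) (g : G), f g = 1)
    (k : Type) [Field k] (r : ℕ)
    (ρ : G →* GL (Fin r) k)
    (A : Subring k) (hred : IsReduced A) (hfg : Algebra.FiniteType ℤ A)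
    (hA : ∀ (g : G) (i j : Fin r),
      ((ρ g : Matrix (Fin r) (Fin r) k) i j ∈ A) ∧
      (((ρ g)⁻¹ : Matrix (Fin r) (Fin r) k) i j ∈ A)) :
    ∀ g : G, ρ g = 1 := by
  obtain ⟨ρ', rfl⟩ := GeneralLinearGroup.exists_comp_map_subtype_eq A ρ hA
  intro g
  rw [MonoidHom.comp_apply, GeneralLinearGroup.apply_eq_one_of_finiteType_int hfin ρ' g, map_one]

/-- Mal'cev–Grothendieck core: a finitely generated group all of whose finite
quotients are trivial has no nontrivial representations into `GL r k`
(char `k = 0`) whose finitely generated image lies in `GL r A` for a reduced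
subring `A ⊆ k` finitely generated as a ℤ-algebra. -/
theorem stmt_14 (G : Type) [Group G] [Group.FG G]
    (hfin : ∀ (H : Type) [Group H] [Finite H] (f : G →* H) (g : G), f g = 1)
    (k : Type) [Field k] [CharZero k] (r : ℕ) (hr : 1 ≤ r)
    (ρ : G →* GL (Fin r) k) (him : Group.FG ρ.range)
    (A : Subring k) (hred : IsReduced A) (hfg : Algebra.FiniteType ℤ A)
    (hA : ∀ (g : G) (i j : Fin r),
      ((ρ g : Matrix (Fin r) (Fin r) k) i j ∈ A) ∧
      (((ρ g)⁻¹ : Matrix (Fin r) (Fin r) k) i j ∈ A)) :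
    ∀ g : G, ρ g = 1 :=
  stmt_14_general G hfin k r ρ A hred hfg hA
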